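/- arXiv:0710.2347 — 3 statements merged into one kernel-verified Lean document; each statement's English description precedes it below -/
import Mathlib

section
/- Let S ⊆ (0,∞), let Y be a finite ultrametric space with nonzero distances in S, let X be a subspace of Y, and let <^X be a convex linear ordering on X. Then there exists a convex linear ordering <^Y on Y whose restriction to X equals <^X. -/
/-!
Extend the order on `X` to a linear order `≤` of `Y` in which `X` comes first. For `x ≠ y`
the open balls of radius `d(x, y)` around `x` and `y` are disjoint; put `x` before `y` when the
`≤`-least point of the ball around `x` precedes that of the ball around `y`. By the isosceles
property of ultrametrics this is a convex linear ordering. On `X` it agrees with the given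
order: the least points of balls centred in `X` lie in `X`, and a convex ordering of `X`
orders disjoint balls as it orders their centres.
-/

/-- A finite ultrametric space with all nonzero distances in `S`. -/
structure FinUltra (S : Set ℝ) where
  n : ℕ
  d : Fin n → Fin n → ℝ
  d_self : ∀ x, d x x = 0
  d_symm : ∀ x y, d x y = d y x
  d_mem : ∀ x y, x ≠ y → d x y ∈ S
  ultra : ∀ x y z, d x z ≤ max (d x y) (d y z)

/-- `r` is a strict total order (irreflexive, transitive, trichotomous). -/
def IsSTO {X : Type*} (r : X → X → Prop) : Prop :=
  (∀ x, ¬ r x x) ∧ (∀ x y z, r x y → r y z → r x z) ∧ (∀ x y, r x y ∨ x = y ∨ r y x)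

/-- `r` is a convex linear ordering with respect to the distance `d` : a strict total
order for which every closed metric ball is an interval (equivalently,
`r x y → r y z → d x y ≤ d x z ∧ d y z ≤ d x z`). -/
def IsConvexSTO {X : Type*} (d : X → X → ℝ) (r : X → X → Prop) : Prop :=
  IsSTO r ∧ ∀ x y z, r x y → r y z → d x y ≤ d x z ∧ d y z ≤ d x z

/-- `A` is a copy of the ordered space `(X, rX)` inside `(Z, rZ)` : the image of an
isometric, order-preserving embedding. -/
def IsOrdCopy {S : Set ℝ} (X Z : FinUltra S) (rX : Fin X.n → Fin X.n → Prop)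
    (rZ : Fin Z.n → Fin Z.n → Prop) (A : Set (Fin Z.n)) : Prop :=
  ∃ f : Fin X.n → Fin Z.n, Set.range f = A ∧
    (∀ a b, Z.d (f a) (f b) = X.d a b) ∧ (∀ a b, rX a b → rZ (f a) (f b))

/-- `A` is an isometric copy of `X` inside `Z`. -/
def IsCopy {S : Set ℝ} (X Z : FinUltra S) (A : Set (Fin Z.n)) : Prop :=
  ∃ f : Fin X.n → Fin Z.n, Set.range f = A ∧ ∀ a b, Z.d (f a) (f b) = X.d a b

/-- The number τ(X) = |cLO(X)| / |iso(X)|. -/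
noncomputable def tau (S : Set ℝ) (X : FinUltra S) : ℕ :=
  Nat.card {r : Fin X.n → Fin X.n → Prop // IsConvexSTO X.d r} /
    Nat.card {g : Fin X.n ≃ Fin X.n // ∀ a b, X.d (g a) (g b) = X.d a b}

universe u

theorem IsSTO.asymm {X : Type*} {r : X → X → Prop} (hr : IsSTO r) {a b : X} (hab : r a b) :
    ¬ r b a :=
  fun hba => hr.1 a (hr.2.1 a b a hab hba)

theorem IsSTO.isStrictTotalOrder {X : Type*} {r : X → X → Prop} (hr : IsSTO r) :
    IsStrictTotalOrder X r where
  irrefl := hr.1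
  trans := hr.2.1
  trichotomous a b hab hba := (hr.2.2 a b).resolve_left hab |>.resolve_right hba

theorem IsSTO.iff_of_imp {X : Type*} {r s : X → X → Prop} (hr : IsSTO r)
    (hs : ∀ a b, s a b → ¬ s b a) (hrs : ∀ a b, r a b → s a b) (a b : X) : s a b ↔ r a b := by
  refine ⟨fun hab => ?_, hrs a b⟩
  rcases hr.2.2 a b with h | rfl | h
  · exact h
  · exact absurd hab (hs a a hab)
  · exact absurd (hrs b a h) (hs a b hab)

theorem IsSTO.exists_injective_extending_initial {X : Type u} {A : Set X}
    {r : A → A → Prop} (hr : IsSTO r) :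
    ∃ (β : Type u) (_ : LinearOrder β) (f : X → β), Function.Injective f ∧
      (∀ a b : A, r a b → f a < f b) ∧ ∀ (a : A) (z : X), z ∉ A → f a < f z := by
  classical
  let : LinearOrder A := @linearOrderOfSTO _ r hr.isStrictTotalOrder _
  let : LinearOrder ↥Aᶜ := linearOrderOfSTO WellOrderingRel
  refine ⟨A ⊕ₗ ↥Aᶜ, inferInstance, fun z => toLex ((Equiv.Set.sumCompl A).symm z),
    toLex.injective.comp (Equiv.injective _), fun a b hab => ?_, fun a z hz => ?_⟩
  · simp only [Equiv.Set.sumCompl_symm_apply]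
    exact Sum.Lex.inl_lt_inl_iff.2 hab
  · simp only [Equiv.Set.sumCompl_symm_apply, Equiv.Set.sumCompl_symm_apply_of_notMem hz]
    exact Sum.Lex.inl_lt_inr _ _

theorem IsConvexSTO.rel_of_dist_lt_left {X : Type*} {d : X → X → ℝ} {r : X → X → Prop}
    (hr : IsConvexSTO d r) {a a' b : X} (hab : r a b) (ha : d a a' < d a b) : r a' b := by
  rcases hr.1.2.2 a' b with h | rfl | h
  · exact h
  · exact absurd ha (lt_irrefl _)
  · exact absurd (hr.2 a b a' hab h).1 ha.not_ge

theorem IsConvexSTO.rel_of_dist_lt_right {X : Type*} {d : X → X → ℝ} {r : X → X → Prop}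
    (hr : IsConvexSTO d r) {a b b' : X} (hab : r a b) (hb : d b' b < d a b) : r a b' := by
  rcases hr.1.2.2 a b' with h | rfl | h
  · exact h
  · exact absurd hb (lt_irrefl _)
  · exact absurd (hr.2 b' a b h hab).2 hb.not_ge

noncomputable section

namespace FinUltra

variable {S : Set ℝ} (Y : FinUltra S)

theorem d_eq_of_lt {x y z : Fin Y.n} (h : Y.d x y < Y.d y z) : Y.d x z = Y.d y z := by
  refine le_antisymm ((Y.ultra x y z).trans (max_le h.le le_rfl)) ?_
  have := Y.ultra y x z
  rw [Y.d_symm y x] at this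
  exact (le_max_iff.1 this).resolve_left h.not_ge

theorem d_eq_of_gt {x y z : Fin Y.n} (h : Y.d y z < Y.d x y) : Y.d x z = Y.d x y := by
  rw [Y.d_symm, Y.d_eq_of_lt (by rwa [Y.d_symm z y, Y.d_symm y x]), Y.d_symm]

def ball (x : Fin Y.n) (δ : ℝ) : Finset (Fin Y.n) :=
  Finset.univ.filter (fun z => Y.d x z < δ)

theorem mem_ball {x z : Fin Y.n} {δ : ℝ} : z ∈ Y.ball x δ ↔ Y.d x z < δ := by
  simp [ball]

theorem ball_eq_of_d_lt {x x' : Fin Y.n} {δ : ℝ} (h : Y.d x x' < δ) :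
    Y.ball x δ = Y.ball x' δ := by
  ext z
  simp only [mem_ball]
  constructor
  · exact fun hz => (Y.ultra x' x z).trans_lt (max_lt (by rwa [Y.d_symm]) hz)
  · exact fun hz => (Y.ultra x x' z).trans_lt (max_lt h hz)

theorem disjoint_ball (x y : Fin Y.n) : Disjoint (Y.ball x (Y.d x y)) (Y.ball y (Y.d x y)) := by
  refine Finset.disjoint_left.2 fun z hx hy => ?_
  rw [mem_ball] at hx hy
  have := Y.ultra x z y
  rw [Y.d_symm z y] at this
  exact this.not_gt (max_lt hx hy)

variable {β : Type*} [LinearOrder β] (f : Fin Y.n → β)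

def ballMin (x : Fin Y.n) (δ : ℝ) : WithTop β :=
  ((Y.ball x δ).image f).min

variable {Y f}

theorem ballMin_le {x z : Fin Y.n} {δ : ℝ} (hz : Y.d x z < δ) : Y.ballMin f x δ ≤ f z :=
  Finset.min_le (Finset.mem_image_of_mem f (Y.mem_ball.2 hz))

theorem exists_ballMin_eq (x : Fin Y.n) {δ : ℝ} (hδ : 0 < δ) :
    ∃ z, Y.d x z < δ ∧ Y.ballMin f x δ = f z := by
  have hx : x ∈ Y.ball x δ := Y.mem_ball.2 (by rwa [Y.d_self])
  obtain ⟨m, hm⟩ := Finset.min_of_nonempty ⟨f x, Finset.mem_image_of_mem f hx⟩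
  obtain ⟨z, hz, rfl⟩ := Finset.mem_image.1 (Finset.mem_of_min hm)
  exact ⟨z, Y.mem_ball.1 hz, hm⟩

theorem ballMin_eq_of_d_lt {x x' : Fin Y.n} {δ : ℝ} (h : Y.d x x' < δ) :
    Y.ballMin f x δ = Y.ballMin f x' δ := by
  rw [ballMin, ballMin, Y.ball_eq_of_d_lt h]

theorem ballMin_ne (hpos : ∀ x y, x ≠ y → 0 < Y.d x y) (hf : Function.Injective f)
    {x y : Fin Y.n} (hxy : x ≠ y) : Y.ballMin f x (Y.d x y) ≠ Y.ballMin f y (Y.d x y) := by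
  obtain ⟨u, hu, hu'⟩ := exists_ballMin_eq (f := f) x (hpos x y hxy)
  obtain ⟨v, hv, hv'⟩ := exists_ballMin_eq (f := f) y (hpos x y hxy)
  rw [hu', hv']
  intro huv
  obtain rfl := hf (WithTop.coe_injective huv)
  exact Finset.disjoint_left.1 (Y.disjoint_ball x y) (Y.mem_ball.2 hu) (Y.mem_ball.2 hv)

variable (Y f)

def InducedLT (x y : Fin Y.n) : Prop :=
  Y.ballMin f x (Y.d x y) < Y.ballMin f y (Y.d x y)

variable {Y f}

theorem inducedLT_iff_of_d_lt_left {x y z : Fin Y.n} (h : Y.d x y < Y.d y z) :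
    Y.InducedLT f x z ↔ Y.InducedLT f y z := by
  rw [InducedLT, InducedLT, Y.d_eq_of_lt h, ballMin_eq_of_d_lt h]

theorem inducedLT_iff_of_d_lt_right {x y z : Fin Y.n} (h : Y.d y z < Y.d x y) :
    Y.InducedLT f x z ↔ Y.InducedLT f x y := by
  have hzy : Y.d z y < Y.d x y := by rwa [Y.d_symm z y]
  rw [InducedLT, InducedLT, Y.d_eq_of_gt h, ballMin_eq_of_d_lt hzy]

theorem d_eq_of_inducedLT_of_d_eq {x y z : Fin Y.n} (hxy : Y.InducedLT f x y)
    (hyz : Y.InducedLT f y z) (h : Y.d x y = Y.d y z) : Y.d x z = Y.d x y := by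
  rw [InducedLT, ← h] at hyz
  refine ((Y.ultra x y z).trans (by rw [h, max_self])).antisymm (not_lt.1 fun hxz => ?_)
  rw [InducedLT, ballMin_eq_of_d_lt hxz] at hxy
  exact lt_asymm hxy hyz

theorem inducedLT_trans_and_d_eq {x y z : Fin Y.n} (hxy : Y.InducedLT f x y)
    (hyz : Y.InducedLT f y z) : Y.InducedLT f x z ∧ Y.d x z = max (Y.d x y) (Y.d y z) := by
  rcases lt_trichotomy (Y.d x y) (Y.d y z) with h | h | h
  · exact ⟨(inducedLT_iff_of_d_lt_left h).2 hyz, by rw [Y.d_eq_of_lt h, max_eq_right h.le]⟩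
  · have hxz := d_eq_of_inducedLT_of_d_eq hxy hyz h
    refine ⟨?_, by rw [hxz, ← h, max_self]⟩
    rw [InducedLT, ← h] at hyz
    rw [InducedLT, hxz]
    exact hxy.trans hyz
  · exact ⟨(inducedLT_iff_of_d_lt_right h).2 hxy, by rw [Y.d_eq_of_gt h, max_eq_left h.le]⟩

theorem isConvexSTO_inducedLT (hpos : ∀ x y, x ≠ y → 0 < Y.d x y)
    (hf : Function.Injective f) : IsConvexSTO Y.d (Y.InducedLT f) := by
  refine ⟨⟨fun x => lt_irrefl _, fun x y z hxy hyz => (inducedLT_trans_and_d_eq hxy hyz).1,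
    fun x y => ?_⟩, fun x y z hxy hyz => ?_⟩
  · by_cases hxy : x = y
    · exact .inr (.inl hxy)
    · rcases (ballMin_ne hpos hf hxy).lt_or_gt with h | h
      · exact .inl h
      · exact .inr (.inr (by rwa [InducedLT, Y.d_symm]))
  · rw [(inducedLT_trans_and_d_eq hxy hyz).2]
    exact ⟨le_max_left _ _, le_max_right _ _⟩

theorem inducedLT_of_isConvexSTO {A : Set (Fin Y.n)} {r : A → A → Prop}
    (hr : IsConvexSTO (fun a b : A => Y.d a b) r) (hpos : ∀ x y, x ≠ y → 0 < Y.d x y)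
    (hmono : ∀ a b : A, r a b → f a < f b) (hfirst : ∀ (a : A) (z : Fin Y.n), z ∉ A → f a < f z)
    {a b : A} (hab : r a b) : Y.InducedLT f a b := by
  have hδ : 0 < Y.d a b := hpos a b fun h => hr.1.1 a (Subtype.ext h ▸ hab)
  obtain ⟨u, hu, hu'⟩ := exists_ballMin_eq (f := f) a hδ
  obtain ⟨v, hv, hv'⟩ := exists_ballMin_eq (f := f) b hδ
  have mem (c : A) {w : Fin Y.n} (hw : Y.ballMin f c (Y.d a b) = f w) : w ∈ A := by
    by_contra hwA
    have hwc : (f w : WithTop β) ≤ f c := hw ▸ ballMin_le (by rwa [Y.d_self])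
    exact (WithTop.coe_le_coe.1 hwc).not_gt (hfirst c w hwA)
  let u' : A := ⟨u, mem a hu'⟩
  let v' : A := ⟨v, mem b hv'⟩
  have hub : r u' b := hr.rel_of_dist_lt_left hab hu
  have hvb : Y.d v b < Y.d u b := by
    rw [Y.d_eq_of_lt (by rwa [Y.d_symm] : Y.d u a < Y.d a b), Y.d_symm]
    exact hv
  have huv : r u' v' := hr.rel_of_dist_lt_right hub hvb
  rw [InducedLT, hu', hv']
  exact WithTop.coe_lt_coe.2 (hmono u' v' huv)

end FinUltra

end

/-- Reasonability: any convex linear ordering on a subspace `X` of `Y` extends to a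
convex linear ordering on `Y`. -/
theorem convex_ordering_extension
    (S : Set ℝ) (hSpos : ∀ s ∈ S, 0 < s) (Y : FinUltra S)
    (A : Set (Fin Y.n)) (rX : A → A → Prop)
    (hrX : IsConvexSTO (fun a b : A => Y.d a.1 b.1) rX) :
    ∃ rY : Fin Y.n → Fin Y.n → Prop, IsConvexSTO Y.d rY ∧
      ∀ a b : A, rY a.1 b.1 ↔ rX a b := by
  have hpos : ∀ x y, x ≠ y → 0 < Y.d x y := fun x y h => hSpos _ (Y.d_mem x y h)
  obtain ⟨β, _, f, hf, hmono, hfirst⟩ := hrX.1.exists_injective_extending_initial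
  have hY := Y.isConvexSTO_inducedLT hpos hf
  exact ⟨Y.InducedLT f, hY, hrX.1.iff_of_imp (fun a b => hY.1.asymm)
    (fun a b => FinUltra.inducedLT_of_isConvexSTO hrX hpos hmono hfirst)⟩
end

section
/- Let S ⊆ (0,∞). Every finite ultrametric space X with nonzero distances in S embeds isometrically into a finite convexly order-invariant ultrametric space Y with nonzero distances in S. -/
/-- `Y` is convexly order-invariant: any two convex linear orderings on `Y` are
isomorphic via a bijective self-isometry. -/
def ConvOrdInv {S : Set ℝ} (Y : FinUltra S) : Prop :=
  ∀ r₁ r₂ : Fin Y.n → Fin Y.n → Prop, IsConvexSTO Y.d r₁ → IsConvexSTO Y.d r₂ →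
    ∃ g : Fin Y.n ≃ Fin Y.n, (∀ a b, Y.d (g a) (g b) = Y.d a b) ∧
      ∀ a b, r₁ a b → r₂ (g a) (g b)

/-!
Let `s₀ > s₁ > ⋯ > s_{k-1}` be the nonzero distances of `X`, and let `Y` consist of the words of
length `k` over an alphabet of size `|X|`, with `d(u, v) = sᵢ` for the first index `i` at which `u`
and `v` differ. Sending `x` to the word whose `i`-th letter is a fixed representative of the open
ball of radius `sᵢ` about `x` embeds `X` isometrically into `Y`.

The balls of radius `< s₀` of `Y` are the sets of words with a given first letter. A convex order
makes them intervals, so it induces a linear order on the letters, and it restricts to convex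
orders on these balls, each a copy of the same construction one level down. Matching the induced
orders on letters by a permutation (two linear orders on a finite set are isomorphic) and the
restrictions to the balls by induction gives the required self-isometry.
-/

theorem IsSTO.isWellOrder {α : Type*} [Finite α] {r : α → α → Prop} (hr : IsSTO r) :
    IsWellOrder α r :=
  have : IsTrans α r := ⟨hr.2.1⟩
  have : Std.Irrefl r := ⟨hr.1⟩
  { trichotomous a b hab hba := ((hr.2.2 a b).resolve_left hab).resolve_right hba
    wf := Finite.wellFounded_of_trans_of_irrefl r }

theorem IsSTO.exists_equiv_map_rel {α : Type*} [Finite α] {r q : α → α → Prop}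
    (hr : IsSTO r) (hq : IsSTO q) : ∃ σ : α ≃ α, ∀ a b, r a b → q (σ a) (σ b) := by
  have := hr.isWellOrder
  have := hq.isWellOrder
  have := Fintype.ofFinite α
  obtain ⟨e⟩ := Ordinal.type_eq.mp (by simp : Ordinal.type r = Ordinal.type q)
  exact ⟨e.toEquiv, fun a b => e.map_rel_iff.mpr⟩

section TreeDist

variable {α : Type*} [DecidableEq α]

/-- `treeDist s u v = s i` for the first index `i` at which `u` and `v` differ. -/
def treeDist : {k : ℕ} → (Fin k → ℝ) → (Fin k → α) → (Fin k → α) → ℝ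
  | 0, _, _, _ => 0
  | _ + 1, s, u, v => if u 0 = v 0 then treeDist (Fin.tail s) (Fin.tail u) (Fin.tail v) else s 0

@[simp]
theorem treeDist_cons_cons {k : ℕ} (s : Fin (k + 1) → ℝ) (a b : α) (x y : Fin k → α) :
    treeDist s (Fin.cons a x) (Fin.cons b y) =
      if a = b then treeDist (Fin.tail s) x y else s 0 := by
  simp [treeDist]

@[simp]
theorem treeDist_self {k : ℕ} (s : Fin k → ℝ) (u : Fin k → α) : treeDist s u u = 0 := by
  induction k with
  | zero => rfl
  | succ k ih => simp [treeDist, ih]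

theorem treeDist_comm {k : ℕ} (s : Fin k → ℝ) (u v : Fin k → α) :
    treeDist s u v = treeDist s v u := by
  induction k with
  | zero => rfl
  | succ k ih => simp only [treeDist, ih, eq_comm]

theorem treeDist_mem_range_of_ne {k : ℕ} (s : Fin k → ℝ) {u v : Fin k → α} (huv : u ≠ v) :
    treeDist s u v ∈ Set.range s := by
  induction k with
  | zero => exact absurd (Subsingleton.elim u v) huv
  | succ k ih =>
    rw [treeDist]
    split_ifs with h0
    · have htail : Fin.tail u ≠ Fin.tail v := fun h => huv (by
        rw [← Fin.cons_self_tail u, ← Fin.cons_self_tail v, h0, h])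
      obtain ⟨i, hi⟩ := ih (Fin.tail s) htail
      exact ⟨i.succ, hi⟩
    · exact ⟨0, rfl⟩

theorem treeDist_tail_lt {k : ℕ} {s : Fin (k + 1) → ℝ} (hs : StrictAnti s)
    (hpos : ∀ i, 0 < s i) (x y : Fin k → α) : treeDist (Fin.tail s) x y < s 0 := by
  by_cases hxy : x = y
  · simpa [hxy] using hpos 0
  · obtain ⟨i, hi⟩ := treeDist_mem_range_of_ne (Fin.tail s) hxy
    exact hi ▸ hs i.succ_pos

theorem treeDist_le_max {k : ℕ} {s : Fin k → ℝ} (hs : StrictAnti s) (hpos : ∀ i, 0 < s i)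
    (u v w : Fin k → α) : treeDist s u w ≤ max (treeDist s u v) (treeDist s v w) := by
  induction k with
  | zero => simp [treeDist]
  | succ k ih =>
    induction u using Fin.consCases with | _ a x =>
    induction v using Fin.consCases with | _ b y =>
    induction w using Fin.consCases with | _ c z =>
    have ih' := ih (s := Fin.tail s) (hs.comp_strictMono Fin.strictMono_succ)
      (fun i => hpos i.succ) x y z
    rcases eq_or_ne a b with rfl | hab
    · rcases eq_or_ne a c with rfl | hac
      · simpa using ih'
      · simp [hac]
    rcases eq_or_ne b c with rfl | hbc
    · simp [hab]
    · rcases eq_or_ne a c with rfl | hac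
      · simpa [hab] using le_max_of_le_left (treeDist_tail_lt hs hpos x z).le
      · simp [hab, hbc, hac]

section Cons

variable {k : ℕ} {s : Fin (k + 1) → ℝ} {r : (Fin (k + 1) → α) → (Fin (k + 1) → α) → Prop}

theorem IsConvexSTO.cons_fiber (hr : IsConvexSTO (treeDist s) r) (a : α) :
    IsConvexSTO (treeDist (Fin.tail s)) (fun x y => r (Fin.cons a x) (Fin.cons a y)) := by
  obtain ⟨⟨irr, trans, tri⟩, conv⟩ := hr
  refine ⟨⟨fun x => irr _, fun x y z => trans _ _ _, fun x y => ?_⟩, fun x y z hxy hyz => ?_⟩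
  · simpa only [Fin.cons_inj, true_and] using tri (Fin.cons a x) (Fin.cons a y)
  · simpa using conv _ _ _ hxy hyz

theorem IsConvexSTO.cons_rel_cons_of_ne (hs : StrictAnti s) (hpos : ∀ i, 0 < s i)
    (hr : IsConvexSTO (treeDist s) r) {a b : α} (hab : a ≠ b) {x y : Fin k → α}
    (h : r (Fin.cons a x) (Fin.cons b y)) (x' y' : Fin k → α) :
    r (Fin.cons a x') (Fin.cons b y') := by
  obtain ⟨⟨-, -, tri⟩, conv⟩ := hr
  have cons_ne : ∀ x y, (Fin.cons a x : Fin (k + 1) → α) ≠ Fin.cons b y := fun x y h =>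
    hab (Fin.cons_inj.mp h).1
  have near_lt_far : ∀ (c : α) (z w x y : Fin k → α), treeDist s (Fin.cons c z) (Fin.cons c w) <
      treeDist s (Fin.cons a x) (Fin.cons b y) := fun c z w x y => by
    simpa [hab] using treeDist_tail_lt hs hpos z w
  have h₁ : r (Fin.cons a x') (Fin.cons b y) := by
    rcases tri (Fin.cons a x') (Fin.cons b y) with h' | h' | h'
    · exact h'
    · exact absurd h' (cons_ne _ _)
    · exact ((near_lt_far _ _ _ _ _).not_ge (conv _ _ _ h h').1).elim
  rcases tri (Fin.cons a x') (Fin.cons b y') with h' | h' | h'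
  · exact h'
  · exact absurd h' (cons_ne _ _)
  · exact ((near_lt_far _ _ _ _ _).not_ge (conv _ _ _ h' h₁).2).elim

/-- The order a convex order induces on the balls of radius `< s 0`, i.e. on first coordinates. -/
def consHeadRel (r : (Fin (k + 1) → α) → (Fin (k + 1) → α) → Prop) (a b : α) : Prop :=
  a ≠ b ∧ ∀ x y, r (Fin.cons a x) (Fin.cons b y)

theorem IsConvexSTO.isSTO_consHeadRel (hs : StrictAnti s) (hpos : ∀ i, 0 < s i)
    (hr : IsConvexSTO (treeDist s) r) : IsSTO (consHeadRel r) := by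
  obtain ⟨irr, trans, tri⟩ := hr.1
  refine ⟨fun a h => h.1 rfl, fun a b c ⟨hab, h₁⟩ ⟨hbc, h₂⟩ => ⟨?_, ?_⟩, fun a b => ?_⟩
  · rintro rfl
    exact irr _ (trans _ _ _ (h₁ (fun _ => a) (fun _ => a)) (h₂ _ _))
  · exact fun x y => trans _ _ _ (h₁ x (fun _ => b)) (h₂ _ y)
  rcases eq_or_ne a b with rfl | hab
  · exact Or.inr (Or.inl rfl)
  rcases tri (Fin.cons a fun _ => a) (Fin.cons b fun _ => a) with h | h | h
  · exact Or.inl ⟨hab, hr.cons_rel_cons_of_ne hs hpos hab h⟩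
  · exact absurd (Fin.cons_inj.mp h).1 hab
  · exact Or.inr (Or.inr ⟨hab.symm, hr.cons_rel_cons_of_ne hs hpos hab.symm h⟩)

end Cons

theorem exists_treeDist_isometry_map_convexSTO [Finite α] {k : ℕ} {s : Fin k → ℝ}
    (hs : StrictAnti s) (hpos : ∀ i, 0 < s i) {r₁ r₂ : (Fin k → α) → (Fin k → α) → Prop}
    (h₁ : IsConvexSTO (treeDist s) r₁) (h₂ : IsConvexSTO (treeDist s) r₂) :
    ∃ g : (Fin k → α) ≃ (Fin k → α),
      (∀ u v, treeDist s (g u) (g v) = treeDist s u v) ∧ ∀ u v, r₁ u v → r₂ (g u) (g v) := by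
  induction k with
  | zero =>
    refine ⟨Equiv.refl _, fun u v => rfl, fun u v huv => ?_⟩
    exact absurd (Subsingleton.elim u v ▸ huv) (h₁.1.1 v)
  | succ k ih =>
    obtain ⟨σ, hσ⟩ := (h₁.isSTO_consHeadRel hs hpos).exists_equiv_map_rel
      (h₂.isSTO_consHeadRel hs hpos)
    have hst : StrictAnti (Fin.tail s) := hs.comp_strictMono Fin.strictMono_succ
    choose g hg_dist hg_rel using fun a =>
      ih hst (fun i => hpos i.succ) (h₁.cons_fiber a) (h₂.cons_fiber (σ a))
    let G := (Fin.consEquiv fun _ => α).symm.trans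
      ((Equiv.prodShear σ g).trans (Fin.consEquiv fun _ => α))
    have hG : ∀ a x, G (Fin.cons a x) = Fin.cons (σ a) (g a x) := fun a x => rfl
    refine ⟨G, Fin.consCases fun a x => Fin.consCases fun b y => ?_,
      Fin.consCases fun a x => Fin.consCases fun b y huv => ?_⟩
    · rw [hG, hG]
      rcases eq_or_ne a b with rfl | hab
      · simp [hg_dist]
      · simp [hab, σ.injective.ne hab]
    · rw [hG, hG]
      rcases eq_or_ne a b with rfl | hab
      · exact hg_rel a x y huv
      · exact (hσ a b ⟨hab, h₁.cons_rel_cons_of_ne hs hpos hab huv⟩).2 _ _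

end TreeDist

theorem IsConvexSTO.comap {α β : Type*} {d : β → β → ℝ} {r : β → β → Prop}
    (hr : IsConvexSTO d r) {f : α → β} (hf : Function.Injective f) :
    IsConvexSTO (fun a b => d (f a) (f b)) (fun a b => r (f a) (f b)) := by
  obtain ⟨⟨irr, trans, tri⟩, conv⟩ := hr
  refine ⟨⟨fun a => irr _, fun a b c => trans _ _ _, fun a b => ?_⟩, fun a b c => conv _ _ _⟩
  simpa only [hf.eq_iff] using tri (f a) (f b)

theorem Finset.exists_strictAnti_range {α : Type*} [LinearOrder α] (D : Finset α) :
    ∃ (k : ℕ) (s : Fin k → α), StrictAnti s ∧ Set.range s = D :=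
  ⟨D.card, fun i => D.orderEmbOfFin rfl i.rev,
    (D.orderEmbOfFin rfl).strictMono.comp_strictAnti Fin.rev_strictAnti, by
      rw [Set.range_comp' _ Fin.rev, Fin.rev_surjective.range_eq, Set.image_univ,
        Finset.range_orderEmbOfFin]⟩

namespace FinUltra

variable {S : Set ℝ}

theorem d_nonneg (X : FinUltra S) (x y : Fin X.n) : 0 ≤ X.d x y := by
  simpa [X.d_self, X.d_symm y x] using X.ultra x y x

theorem d_lt_of_lt_of_lt (X : FinUltra S) {x y z : Fin X.n} {ρ : ℝ} (hxy : X.d x y < ρ)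
    (hyz : X.d y z < ρ) : X.d x z < ρ :=
  (X.ultra x y z).trans_lt (max_lt hxy hyz)

theorem exists_strictAnti_dists (X : FinUltra S) :
    ∃ (k : ℕ) (s : Fin k → ℝ), StrictAnti s ∧ (∀ i, 0 < s i) ∧ (∀ i, s i ∈ S) ∧
      ∀ x y, X.d x y = 0 ∨ X.d x y ∈ Set.range s := by
  classical
  obtain ⟨k, s, hs, hrange⟩ := Finset.exists_strictAnti_range
    ((Finset.univ.image fun p : Fin X.n × Fin X.n => X.d p.1 p.2).filter (0 < ·))
  have mem_range : ∀ t, t ∈ Set.range s ↔ ∃ x y, X.d x y = t ∧ 0 < t := by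
    simp [hrange]
  refine ⟨k, s, hs, fun i => ?_, fun i => ?_, fun x y => ?_⟩
  · obtain ⟨x, y, -, hpos⟩ := (mem_range _).1 ⟨i, rfl⟩
    exact hpos
  · obtain ⟨x, y, hxy, hpos⟩ := (mem_range _).1 ⟨i, rfl⟩
    have hne : x ≠ y := by
      rintro rfl
      rw [← hxy, X.d_self] at hpos
      exact lt_irrefl _ hpos
    exact hxy ▸ X.d_mem x y hne
  · rcases (X.d_nonneg x y).eq_or_lt with h | h
    · exact Or.inl h.symm
    · exact Or.inr ((mem_range _).2 ⟨x, y, rfl, h⟩)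

noncomputable def ballRep (X : FinUltra S) (ρ : ℝ) (hρ : 0 < ρ) (x : Fin X.n) : Fin X.n :=
  (Finset.univ.filter fun z => X.d z x < ρ).min' ⟨x, by simpa [X.d_self] using hρ⟩

theorem d_ballRep_lt (X : FinUltra S) {ρ : ℝ} (hρ : 0 < ρ) (x : Fin X.n) :
    X.d (X.ballRep ρ hρ x) x < ρ :=
  (Finset.mem_filter.mp (Finset.min'_mem (Finset.univ.filter fun z => X.d z x < ρ) _)).2

theorem ballRep_eq_iff (X : FinUltra S) {ρ : ℝ} (hρ : 0 < ρ) (x y : Fin X.n) :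
    X.ballRep ρ hρ x = X.ballRep ρ hρ y ↔ X.d x y < ρ := by
  constructor
  · intro h
    refine X.d_lt_of_lt_of_lt ?_ (h ▸ X.d_ballRep_lt hρ y)
    rw [X.d_symm]
    exact X.d_ballRep_lt hρ x
  · intro h
    have hball : (Finset.univ.filter fun z => X.d z x < ρ) =
        Finset.univ.filter fun z => X.d z y < ρ := by
      ext z
      simp only [Finset.mem_filter, Finset.mem_univ, true_and]
      exact ⟨fun hz => X.d_lt_of_lt_of_lt hz h,
        fun hz => X.d_lt_of_lt_of_lt hz (by rwa [X.d_symm])⟩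
    simp only [ballRep, hball]

theorem treeDist_ballRep (X : FinUltra S) {k : ℕ} {s : Fin k → ℝ} (hs : StrictAnti s)
    (hpos : ∀ i, 0 < s i) {x y : Fin X.n} (hxy : X.d x y = 0 ∨ X.d x y ∈ Set.range s) :
    treeDist s (fun i => X.ballRep (s i) (hpos i) x) (fun i => X.ballRep (s i) (hpos i) y) =
      X.d x y := by
  induction k with
  | zero =>
    obtain h | ⟨i, -⟩ := hxy
    · exact h.symm
    · exact i.elim0
  | succ k ih =>
    simp only [treeDist, X.ballRep_eq_iff]
    split_ifs with hlt
    · refine ih (hs.comp_strictMono Fin.strictMono_succ) (fun i => hpos i.succ) ?_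
      obtain h | ⟨i, hi⟩ := hxy
      · exact Or.inl h
      · induction i using Fin.cases with
        | zero => exact absurd hlt (hi ▸ lt_irrefl _)
        | succ j => exact Or.inr ⟨j, hi⟩
    · obtain h | ⟨i, hi⟩ := hxy
      · exact absurd (h ▸ hpos 0) hlt
      · rw [← hi, hs.le_iff_ge.mp (not_lt.mp (hi ▸ hlt)) |>.antisymm (Fin.zero_le i)]

end FinUltra

def treeUltra (S : Set ℝ) (n : ℕ) {k : ℕ} (s : Fin k → ℝ) (hs : StrictAnti s)
    (hpos : ∀ i, 0 < s i) (hsS : ∀ i, s i ∈ S) : FinUltra S where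
  n := n ^ k
  d i j := treeDist s (finFunctionFinEquiv.symm i) (finFunctionFinEquiv.symm j)
  d_self _ := treeDist_self _ _
  d_symm _ _ := treeDist_comm _ _ _
  d_mem i j hij := by
    obtain ⟨m, hm⟩ := treeDist_mem_range_of_ne s (finFunctionFinEquiv.symm.injective.ne hij)
    exact hm ▸ hsS m
  ultra _ _ _ := treeDist_le_max hs hpos _ _ _

theorem treeUltra_convOrdInv {S : Set ℝ} (n : ℕ) {k : ℕ} {s : Fin k → ℝ} (hs : StrictAnti s)
    (hpos : ∀ i, 0 < s i) (hsS : ∀ i, s i ∈ S) : ConvOrdInv (treeUltra S n s hs hpos hsS) := by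
  dsimp only [ConvOrdInv, treeUltra]
  intro r₁ r₂ h₁ h₂
  have pull : ∀ r : Fin (n ^ k) → Fin (n ^ k) → Prop,
      IsConvexSTO (fun i j => treeDist s (finFunctionFinEquiv.symm i)
        (finFunctionFinEquiv.symm j)) r →
      IsConvexSTO (treeDist s) fun u v => r (finFunctionFinEquiv u) (finFunctionFinEquiv v) :=
    fun r hr => by simpa using hr.comap finFunctionFinEquiv.injective
  obtain ⟨g, hg_dist, hg_rel⟩ :=
    exists_treeDist_isometry_map_convexSTO hs hpos (pull r₁ h₁) (pull r₂ h₂)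
  refine ⟨finFunctionFinEquiv.symm.trans (g.trans finFunctionFinEquiv), fun a b => ?_,
    fun a b hab => ?_⟩
  · simp only [Equiv.trans_apply, Equiv.symm_apply_apply, hg_dist]
  · simpa only [Equiv.trans_apply, Equiv.apply_symm_apply]
      using hg_rel _ _ (by simpa only [Equiv.apply_symm_apply] using hab)

theorem embeds_into_convOrdInv_general (S : Set ℝ) (X : FinUltra S) :
    ∃ Y : FinUltra S, ConvOrdInv Y ∧
      ∃ f : Fin X.n → Fin Y.n, ∀ a b, Y.d (f a) (f b) = X.d a b := by
  obtain ⟨k, s, hs, hpos, hsS, hd⟩ := X.exists_strictAnti_dists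
  refine ⟨treeUltra S X.n s hs hpos hsS, treeUltra_convOrdInv X.n hs hpos hsS,
    fun x => finFunctionFinEquiv fun i => X.ballRep (s i) (hpos i) x, fun a b => ?_⟩
  simpa [treeUltra] using X.treeDist_ballRep hs hpos (hd a b)

/-- Every finite ultrametric space with distances in `S` embeds isometrically into a
convexly order-invariant one. -/
theorem embeds_into_convOrdInv
    (S : Set ℝ) (hSpos : ∀ s ∈ S, 0 < s) (X : FinUltra S) :
    ∃ Y : FinUltra S, ConvOrdInv Y ∧
      ∃ f : Fin X.n → Fin Y.n, ∀ a b, Y.d (f a) (f b) = X.d a b :=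
  embeds_into_convOrdInv_general S X
end

section
/- Let S be a countable set of positive reals. Then the ordered ultrametric space (Q_S, <_lex) is ultrahomogeneous: every order-preserving isometry between finite subsets of Q_S extends to a bijective order-preserving self-isometry of (Q_S, <_lex). -/
/-- The Urysohn ultrametric space `Q_S` : finitely supported functions `S → ℚ`. -/
def QS (S : Set ℝ) := {x : S → ℚ // {s : S | x s ≠ 0}.Finite}

/-- The distance on `Q_S` : `d x y = max {s ∈ S | x s ≠ y s}` for `x ≠ y`
(and `0` for `x = y`, the supremum of the empty set being `0`). -/
noncomputable def dQ (S : Set ℝ) (x y : S → ℚ) : ℝ :=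
  sSup (Subtype.val '' {s : S | x s ≠ y s})

/-- The lexicographical ordering on `Q_S` : `x <lex y` iff `x s < y s` where `s` is the
largest element of `S` at which `x` and `y` differ. -/
def lexQ (S : Set ℝ) (x y : S → ℚ) : Prop :=
  ∃ s : S, x s < y s ∧ ∀ t : S, (s : ℝ) < (t : ℝ) → x t = y t

/-!
Back and forth over the countable space `Q_S`; since the inverse of a partial isomorphism is
one, it suffices to add one point `x` to the domain of a finite partial isomorphism `f`.
Let `a` be a point of the domain nearest to `x`, at distance `m`. Points of the domain farther
than `m` from `x` see `x` exactly as they see `a` (ultrametric triangles are isosceles), so the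
image `y` of `x` may differ from `f a` only at coordinate `m`. There a rational is chosen to
sit among the values `f b (m)`, for `b` at distance `m` from `x`, as `x (m)` sits among the
values `b (m)`; this is possible because `f` preserves the order of these values.
-/

lemma cmp_eq_cmp_of_lt_iff_lt {α β : Type*} [LinearOrder α] [LinearOrder β] {x y : α}
    {x' y' : β} (hxy : x < y ↔ x' < y') (hyx : y < x ↔ y' < x') : cmp x y = cmp x' y' := by
  simp only [cmp, cmpUsing, hxy, hyx]

lemma IsSTO.rel_iff {X : Type*} {r : X → X → Prop} (hr : IsSTO r) {x y : X} :
    r x y ↔ x ≠ y ∧ ¬ r y x := by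
  obtain ⟨irrefl, trans, total⟩ := hr
  refine ⟨fun h => ⟨?_, fun h' => irrefl x (trans x y x h h')⟩, fun ⟨hne, hyx⟩ => ?_⟩
  · rintro rfl
    exact irrefl x h
  · exact (total x y).resolve_right (by tauto)

section BackAndForth

variable {X : Type*} {d : X → X → ℝ} {r : X → X → Prop}

variable (d r) in
def IsPartialIso (P : Set (X × X)) : Prop :=
  ∀ p ∈ P, ∀ q ∈ P, d p.2 q.2 = d p.1 q.1 ∧ (r p.2 q.2 ↔ r p.1 q.1)

namespace IsPartialIso

variable {P : Set (X × X)}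

lemma image_swap (hP : IsPartialIso d r P) : IsPartialIso d r (Prod.swap '' P) := by
  rintro _ ⟨p, hp, rfl⟩ _ ⟨q, hq, rfl⟩
  exact ⟨(hP p hp q hq).1.symm, (hP p hp q hq).2.symm⟩

lemma dist_eq (hP : IsPartialIso d r P) {p q : X × X} (hp : p ∈ P) (hq : q ∈ P) :
    d p.2 q.2 = d p.1 q.1 :=
  (hP p hp q hq).1

lemma rel_iff (hP : IsPartialIso d r P) {p q : X × X} (hp : p ∈ P) (hq : q ∈ P) :
    r p.2 q.2 ↔ r p.1 q.1 :=
  (hP p hp q hq).2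

lemma snd_eq_of_fst_eq (hd : ∀ x y, d x y = 0 ↔ x = y) (hP : IsPartialIso d r P) {x y y' : X}
    (hy : (x, y) ∈ P) (hy' : (x, y') ∈ P) : y = y' :=
  (hd y y').1 ((hP.dist_eq hy hy').trans ((hd x x).2 rfl))

lemma fst_eq_of_snd_eq (hd : ∀ x y, d x y = 0 ↔ x = y) (hP : IsPartialIso d r P) {x x' y : X}
    (hx : (x, y) ∈ P) (hx' : (x', y) ∈ P) : x = x' :=
  (hd x x').1 ((hP.dist_eq hx hx').symm.trans ((hd y y).2 rfl))

lemma iUnion {P : ℕ → Set (X × X)} (hmono : Monotone P) (hP : ∀ n, IsPartialIso d r (P n)) :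
    IsPartialIso d r (⋃ n, P n) := by
  intro p hp q hq
  obtain ⟨i, hi⟩ := Set.mem_iUnion.1 hp
  obtain ⟨j, hj⟩ := Set.mem_iUnion.1 hq
  exact hP (max i j) p (hmono (le_max_left i j) hi) q (hmono (le_max_right i j) hj)

lemma insert_of_forall (hcomm : ∀ x y, d x y = d y x) (hd : ∀ x y, d x y = 0 ↔ x = y)
    (hr : IsSTO r) (hP : IsPartialIso d r P) {x y : X}
    (hxy : ∀ p ∈ P, d y p.2 = d x p.1 ∧ (r y p.2 ↔ r x p.1)) :
    IsPartialIso d r (insert (x, y) P) := by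
  have hself : d y y = d x x ∧ (r y y ↔ r x x) :=
    ⟨((hd y y).2 rfl).trans ((hd x x).2 rfl).symm, iff_of_false (hr.1 y) (hr.1 x)⟩
  have hswap : ∀ p ∈ P, d p.2 y = d p.1 x ∧ (r p.2 y ↔ r p.1 x) := by
    intro p hp
    obtain ⟨hdist, hrel⟩ := hxy p hp
    have hne : p.2 = y ↔ p.1 = x := by rw [eq_comm, ← hd y p.2, hdist, hd, eq_comm]
    refine ⟨by rw [hcomm, hdist, hcomm], ?_⟩
    rw [hr.rel_iff, hr.rel_iff (x := p.1), hrel, Ne, Ne, hne]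
  rintro p (rfl | hp) q (rfl | hq)
  exacts [hself, hxy q hq, hswap p hp, hP p hp q hq]

lemma exists_equiv (hd : ∀ x y, d x y = 0 ↔ x = y) (hP : IsPartialIso d r P)
    (hdom : ∀ x, ∃ y, (x, y) ∈ P) (hran : ∀ y, ∃ x, (x, y) ∈ P) :
    ∃ g : X ≃ X, ∀ x, (x, g x) ∈ P := by
  choose f hf using hdom
  choose f' hf' using hran
  exact ⟨⟨f, f', fun x => hP.fst_eq_of_snd_eq hd (hf' (f x)) (hf x),
    fun y => hP.snd_eq_of_fst_eq hd (hf (f' y)) (hf' y)⟩, hf⟩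

lemma exists_back_of_forth (hP : IsPartialIso d r P)
    (hforth : ∀ P : Set (X × X), P.Finite → IsPartialIso d r P →
      ∀ x, ∃ y, IsPartialIso d r (insert (x, y) P))
    (hfin : P.Finite) (y : X) :
    ∃ x, IsPartialIso d r (insert (x, y) P) := by
  obtain ⟨x, hx⟩ := hforth _ (hfin.image Prod.swap) hP.image_swap y
  refine ⟨x, ?_⟩
  simpa [Set.image_insert_eq, Set.image_image] using hx.image_swap

theorem exists_equiv_of_forth [Countable X] (hd : ∀ x y, d x y = 0 ↔ x = y)
    (hforth : ∀ P : Set (X × X), P.Finite → IsPartialIso d r P →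
      ∀ x, ∃ y, IsPartialIso d r (insert (x, y) P))
    (hfin : P.Finite) (hP : IsPartialIso d r P) :
    ∃ g : X ≃ X, (∀ x y, d (g x) (g y) = d x y) ∧ (∀ x y, r (g x) (g y) ↔ r x y) ∧
      ∀ p ∈ P, g p.1 = p.2 := by
  rcases isEmpty_or_nonempty X with hX | hX
  · exact ⟨Equiv.refl X, fun x => isEmptyElim x, fun x => isEmptyElim x,
      fun p _ => isEmptyElim p.1⟩
  obtain ⟨e, he⟩ := exists_surjective_nat X
  have hstep : ∀ (Q : Set (X × X)) (n : ℕ), Q.Finite ∧ IsPartialIso d r Q →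
      ∃ Q', Q ⊆ Q' ∧ (Q'.Finite ∧ IsPartialIso d r Q') ∧
        (∃ y, (e n, y) ∈ Q') ∧ ∃ x, (x, e n) ∈ Q' := by
    rintro Q n ⟨hQfin, hQ⟩
    obtain ⟨y, hy⟩ := hforth Q hQfin hQ (e n)
    obtain ⟨x, hx⟩ := hy.exists_back_of_forth hforth (hQfin.insert _) (e n)
    exact ⟨_, (Set.subset_insert _ _).trans (Set.subset_insert _ _),
      ⟨(hQfin.insert _).insert _, hx⟩, ⟨y, Set.mem_insert_of_mem _ (Set.mem_insert _ _)⟩,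
      ⟨x, Set.mem_insert _ _⟩⟩
  choose! step hsub hgood hdom hran using hstep
  let C : ℕ → Set (X × X) := fun n => Nat.rec P (fun k Q => step Q k) n
  have hC : ∀ n, (C n).Finite ∧ IsPartialIso d r (C n) :=
    fun n => Nat.rec ⟨hfin, hP⟩ (fun k ih => hgood (C k) k ih) n
  have hU : IsPartialIso d r (⋃ n, C n) :=
    iUnion (monotone_nat_of_le_succ fun n => hsub (C n) n (hC n)) fun n => (hC n).2
  obtain ⟨g, hg⟩ := hU.exists_equiv hd
    (fun x => (he x).elim fun n hn => hn ▸ (hdom (C n) n (hC n)).imp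
      fun _ h => Set.mem_iUnion_of_mem (n + 1) h)
    (fun y => (he y).elim fun n hn => hn ▸ (hran (C n) n (hC n)).imp
      fun _ h => Set.mem_iUnion_of_mem (n + 1) h)
  exact ⟨g, fun x y => (hU _ (hg x) _ (hg y)).1, fun x y => (hU _ (hg x) _ (hg y)).2,
    fun p hp => hU.snd_eq_of_fst_eq hd (hg p.1) (Set.mem_iUnion_of_mem 0 hp)⟩

end IsPartialIso

end BackAndForth

section LeadingDiff

variable {S : Set ℝ} {x y z : S → ℚ} {s : S}

def IsLeadingDiff (x y : S → ℚ) (s : S) : Prop :=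
  x s ≠ y s ∧ ∀ t : S, (s : ℝ) < t → x t = y t

namespace IsLeadingDiff

lemma symm (h : IsLeadingDiff x y s) : IsLeadingDiff y x s :=
  ⟨h.1.symm, fun t ht => (h.2 t ht).symm⟩

lemma le_of_ne (h : IsLeadingDiff x y s) {t : S} (ht : x t ≠ y t) : (t : ℝ) ≤ s :=
  not_lt.1 fun hlt => ht (h.2 t hlt)

lemma unique (h : IsLeadingDiff x y s) {s' : S} (h' : IsLeadingDiff x y s') : s = s' :=
  Subtype.ext (le_antisymm (h'.le_of_ne h.1) (h.le_of_ne h'.1))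

lemma dQ_eq (h : IsLeadingDiff x y s) : dQ S x y = s :=
  IsGreatest.csSup_eq ⟨⟨s, h.1, rfl⟩, by rintro _ ⟨t, ht, rfl⟩; exact h.le_of_ne ht⟩

lemma lexQ_iff (h : IsLeadingDiff x y s) : lexQ S x y ↔ x s < y s :=
  ⟨fun ⟨s', hlt, habove⟩ => by rwa [h.unique ⟨hlt.ne, habove⟩],
    fun hlt => ⟨s, hlt, h.2⟩⟩

end IsLeadingDiff

lemma dQ_self (x : S → ℚ) : dQ S x x = 0 := by
  simp [dQ]

lemma dQ_comm (x y : S → ℚ) : dQ S x y = dQ S y x := by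
  simp only [dQ, ne_comm]

lemma dQ_nonneg (hSpos : ∀ s ∈ S, 0 < s) (x y : S → ℚ) : 0 ≤ dQ S x y :=
  Real.sSup_nonneg fun _ ⟨t, _, ht⟩ => ht ▸ (hSpos t t.2).le

lemma lexQ_irrefl (x : S → ℚ) : ¬ lexQ S x x :=
  fun ⟨_, hlt, _⟩ => hlt.false

lemma lexQ_trans (hxy : lexQ S x y) (hyz : lexQ S y z) : lexQ S x z := by
  obtain ⟨s₁, hlt₁, habove₁⟩ := hxy
  obtain ⟨s₂, hlt₂, habove₂⟩ := hyz
  rcases le_total (s₁ : ℝ) s₂ with hle | hle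
  · refine ⟨s₂, lt_of_le_of_lt ?_ hlt₂, fun t ht => (habove₁ t (hle.trans_lt ht)).trans
      (habove₂ t ht)⟩
    rcases hle.lt_or_eq with hlt | heq
    · exact (habove₁ s₂ hlt).le
    · exact Subtype.ext heq ▸ hlt₁.le
  · refine ⟨s₁, lt_of_lt_of_le hlt₁ ?_, fun t ht => (habove₁ t ht).trans
      (habove₂ t (hle.trans_lt ht))⟩
    rcases hle.lt_or_eq with hlt | heq
    · exact (habove₂ s₁ hlt).le
    · exact Subtype.ext heq ▸ hlt₂.le

end LeadingDiff

namespace QS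

variable {S : Set ℝ} {x y z u v w : QS S} {s : S}

lemma exists_isLeadingDiff (h : x ≠ y) : ∃ s, IsLeadingDiff x.1 y.1 s := by
  have hfin : {t : S | x.1 t ≠ y.1 t}.Finite :=
    (x.2.union y.2).subset fun t ht => not_and_or.1 fun h0 => ht (h0.1.trans h0.2.symm)
  have hne : {t : S | x.1 t ≠ y.1 t}.Nonempty := by
    by_contra h'
    exact h (Subtype.ext (funext fun t => not_not.1 fun ht => h' ⟨t, ht⟩))
  obtain ⟨s, hs, hmax⟩ := hfin.exists_maximalFor (fun t : S => (t : ℝ)) _ hne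
  exact ⟨s, hs, fun t hst => not_not.1 fun ht => (hmax ht hst.le).not_gt hst⟩

lemma le_dQ {t : S} (ht : x.1 t ≠ y.1 t) : (t : ℝ) ≤ dQ S x.1 y.1 := by
  obtain ⟨s, hs⟩ := exists_isLeadingDiff fun h : x = y => ht (h ▸ rfl)
  rw [hs.dQ_eq]
  exact hs.le_of_ne ht

lemma dQ_eq_iff (hSpos : ∀ s ∈ S, 0 < s) : dQ S x.1 y.1 = s ↔ IsLeadingDiff x.1 y.1 s := by
  refine ⟨fun h => ?_, IsLeadingDiff.dQ_eq⟩
  have hxy : x ≠ y := by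
    rintro rfl
    exact (hSpos s s.2).ne ((dQ_self x.1).symm.trans h)
  obtain ⟨s', hs'⟩ := exists_isLeadingDiff hxy
  rwa [← Subtype.ext (hs'.dQ_eq.symm.trans h)]

lemma dQ_eq_zero_iff (hSpos : ∀ s ∈ S, 0 < s) : dQ S x.1 y.1 = 0 ↔ x = y := by
  refine ⟨fun h => by_contra fun hxy => ?_, fun h => h ▸ dQ_self x.1⟩
  obtain ⟨s, hs⟩ := exists_isLeadingDiff hxy
  exact (hSpos s s.2).ne' (hs.dQ_eq.symm.trans h)

lemma dQ_le_iff (hSpos : ∀ s ∈ S, 0 < s) :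
    dQ S x.1 y.1 ≤ s ↔ ∀ t : S, (s : ℝ) < t → x.1 t = y.1 t := by
  refine ⟨fun h t hst => not_not.1 fun ht => (le_dQ ht).not_gt (h.trans_lt hst), fun h => ?_⟩
  rcases eq_or_ne x y with rfl | hxy
  · exact (dQ_self x.1).trans_le (hSpos s s.2).le
  obtain ⟨s', hs'⟩ := exists_isLeadingDiff hxy
  exact hs'.dQ_eq.trans_le (not_lt.1 fun hlt => hs'.1 (h s' hlt))

lemma dQ_le_of_dQ_le (hSpos : ∀ s ∈ S, 0 < s) (hxy : dQ S x.1 y.1 ≤ s)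
    (hxz : dQ S x.1 z.1 ≤ s) : dQ S y.1 z.1 ≤ s :=
  (dQ_le_iff hSpos).2 fun t ht =>
    (((dQ_le_iff hSpos).1 hxy t ht).symm).trans ((dQ_le_iff hSpos).1 hxz t ht)

lemma dQ_eq_and_lexQ_iff_of_dQ_lt (hSpos : ∀ s ∈ S, 0 < s)
    (h : dQ S u.1 w.1 < dQ S u.1 v.1) :
    dQ S w.1 v.1 = dQ S u.1 v.1 ∧ (lexQ S w.1 v.1 ↔ lexQ S u.1 v.1) := by
  have huv : u ≠ v := by
    rintro rfl
    exact (dQ_self u.1 ▸ h).not_ge (dQ_nonneg hSpos _ _)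
  obtain ⟨s, hs⟩ := exists_isLeadingDiff huv
  rw [hs.dQ_eq] at h ⊢
  have hwu : ∀ t : S, (s : ℝ) ≤ t → w.1 t = u.1 t := fun t ht =>
    not_not.1 fun hne => (le_dQ (Ne.symm hne)).not_gt (h.trans_le ht)
  have hws : IsLeadingDiff w.1 v.1 s :=
    ⟨hwu s le_rfl ▸ hs.1, fun t ht => (hwu t ht.le).trans (hs.2 t ht)⟩
  exact ⟨hws.dQ_eq, by rw [hws.lexQ_iff, hs.lexQ_iff, hwu s le_rfl]⟩

lemma apply_lt_apply_iff (hSpos : ∀ s ∈ S, 0 < s) (h : dQ S u.1 v.1 ≤ s) :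
    u.1 s < v.1 s ↔ dQ S u.1 v.1 = s ∧ lexQ S u.1 v.1 := by
  refine ⟨fun hlt => ?_, fun ⟨hd, hlex⟩ => ((dQ_eq_iff hSpos).1 hd).lexQ_iff.1 hlex⟩
  have hs : IsLeadingDiff u.1 v.1 s := ⟨hlt.ne, (dQ_le_iff hSpos).1 h⟩
  exact ⟨hs.dQ_eq, hs.lexQ_iff.2 hlt⟩

lemma isSTO_lexQ : IsSTO fun x y : QS S => lexQ S x.1 y.1 := by
  refine ⟨fun x => lexQ_irrefl x.1, fun _ _ _ => lexQ_trans, fun x y => ?_⟩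
  rcases eq_or_ne x y with rfl | hxy
  · exact Or.inr (Or.inl rfl)
  obtain ⟨s, hs⟩ := exists_isLeadingDiff hxy
  rcases hs.1.lt_or_gt with hlt | hgt
  exacts [Or.inl (hs.lexQ_iff.2 hlt), Or.inr (Or.inr (hs.symm.lexQ_iff.2 hgt))]

lemma countable (hS : S.Countable) : Countable (QS S) := by
  have := hS.to_subtype
  refine Function.Injective.countable
    (f := fun x : QS S => Finsupp.ofSupportFinite x.1 x.2) fun x y h => Subtype.ext ?_
  exact congrArg DFunLike.coe h

noncomputable def update (x : QS S) (s : S) (q : ℚ) : QS S :=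
  ⟨Function.update x.1 s q, (x.2.insert s).subset fun t ht =>
    (em (t = s)).imp id fun h h0 => ht ((Function.update_of_ne h _ _).trans h0)⟩

lemma update_apply_self (x : QS S) (s : S) (q : ℚ) : (x.update s q).1 s = q :=
  Function.update_self _ _ _

lemma dQ_update_le (hSpos : ∀ s ∈ S, 0 < s) (x : QS S) (s : S) (q : ℚ) :
    dQ S x.1 (x.update s q).1 ≤ s :=
  (dQ_le_iff hSpos).2 fun _ ht => (Function.update_of_ne (Subtype.coe_lt_coe.1 ht).ne' _ _).symm

variable {P : Set (QS S × QS S)}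

lemma cmp_apply_eq_of_isPartialIso (hSpos : ∀ s ∈ S, 0 < s)
    (hP : IsPartialIso (fun x y : QS S => dQ S x.1 y.1) (fun x y => lexQ S x.1 y.1) P)
    {p q : QS S × QS S} (hp : p ∈ P) (hq : q ∈ P) (hle : dQ S p.1.1 q.1.1 ≤ s) :
    cmp (p.1.1 s) (q.1.1 s) = cmp (p.2.1 s) (q.2.1 s) := by
  have hd := hP.dist_eq hp hq
  have hd' := hP.dist_eq hq hp
  have hle' : dQ S q.1.1 p.1.1 ≤ s := dQ_comm p.1.1 q.1.1 ▸ hle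
  refine cmp_eq_cmp_of_lt_iff_lt ?_ ?_
  · rw [apply_lt_apply_iff hSpos hle, apply_lt_apply_iff hSpos (hd.trans_le hle), hd,
      hP.rel_iff hp hq]
  · rw [apply_lt_apply_iff hSpos hle', apply_lt_apply_iff hSpos (hd'.trans_le hle'), hd',
      hP.rel_iff hq hp]

lemma exists_forth_of_nearest (hSpos : ∀ s ∈ S, 0 < s) (hfin : P.Finite)
    (hP : IsPartialIso (fun x y : QS S => dQ S x.1 y.1) (fun x y => lexQ S x.1 y.1) P)
    {x a fa : QS S} (ha : (a, fa) ∈ P) {m : S} (hm : dQ S x.1 a.1 = m)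
    (hmin : ∀ p ∈ P, (m : ℝ) ≤ dQ S x.1 p.1.1) :
    ∃ y : QS S, ∀ p ∈ P,
      dQ S y.1 p.2.1 = dQ S x.1 p.1.1 ∧ (lexQ S y.1 p.2.1 ↔ lexQ S x.1 p.1.1) := by
  classical
  let near : Order.PartialIso ℚ ℚ :=
    ⟨{p ∈ hfin.toFinset | dQ S x.1 p.1.1 = m}.image fun p => (p.1.1 m, p.2.1 m), by
      simp only [Finset.mem_image, Finset.mem_filter, Set.Finite.mem_toFinset]
      rintro _ ⟨p, ⟨hp, hpm⟩, rfl⟩ _ ⟨p', ⟨hp', hp'm⟩, rfl⟩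
      exact cmp_apply_eq_of_isPartialIso hSpos hP hp hp' (dQ_le_of_dQ_le hSpos hpm.le hp'm.le)⟩
  obtain ⟨q, hq⟩ := near.exists_across (x.1 m)
  have hcmp : ∀ p ∈ P, dQ S x.1 p.1.1 = m → cmp (p.1.1 m) (x.1 m) = cmp (p.2.1 m) q :=
    fun p hp hpm => hq _ (Finset.mem_image_of_mem _
      (Finset.mem_filter.2 ⟨hfin.mem_toFinset.2 hp, hpm⟩))
  refine ⟨fa.update m q, fun p hp => ?_⟩
  have hd := hP.dist_eq ha hp
  rcases (hmin p hp).eq_or_lt with hpm | hpm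
  · have hxp : IsLeadingDiff p.1.1 x.1 m := ((dQ_eq_iff hSpos).1 hpm.symm).symm
    have hfap : dQ S fa.1 p.2.1 ≤ m := hd.trans_le (dQ_le_of_dQ_le hSpos hm.le hpm.ge)
    have hyp : IsLeadingDiff p.2.1 (fa.update m q).1 m := by
      refine ⟨?_, (dQ_le_iff hSpos).1 (dQ_le_of_dQ_le hSpos hfap (dQ_update_le hSpos fa m q))⟩
      rw [update_apply_self]
      exact (eq_iff_eq_of_cmp_eq_cmp (hcmp p hp hpm.symm)).not.1 hxp.1
    rw [dQ_comm, hyp.dQ_eq, hpm, hyp.symm.lexQ_iff, hxp.symm.lexQ_iff, update_apply_self]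
    exact ⟨rfl, (lt_iff_lt_of_cmp_eq_cmp (cmp_eq_cmp_symm.1 (hcmp p hp hpm.symm))).symm⟩
  · obtain ⟨hdist, hlex'⟩ := dQ_eq_and_lexQ_iff_of_dQ_lt hSpos (hm.trans_lt hpm)
    have hfar : dQ S fa.1 (fa.update m q).1 < dQ S fa.1 p.2.1 :=
      (dQ_update_le hSpos fa m q).trans_lt (hpm.trans_eq (hd.trans hdist).symm)
    obtain ⟨hdist', hlex''⟩ := dQ_eq_and_lexQ_iff_of_dQ_lt hSpos hfar
    exact ⟨hdist'.trans (hd.trans hdist), hlex''.trans ((hP.rel_iff ha hp).trans hlex')⟩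

lemma exists_isPartialIso_insert (hSpos : ∀ s ∈ S, 0 < s) (hfin : P.Finite)
    (hP : IsPartialIso (fun x y : QS S => dQ S x.1 y.1) (fun x y => lexQ S x.1 y.1) P)
    (x : QS S) :
    ∃ y, IsPartialIso (fun x y : QS S => dQ S x.1 y.1) (fun x y => lexQ S x.1 y.1)
      (insert (x, y) P) := by
  suffices ∃ y : QS S, ∀ p ∈ P,
      dQ S y.1 p.2.1 = dQ S x.1 p.1.1 ∧ (lexQ S y.1 p.2.1 ↔ lexQ S x.1 p.1.1) from
    this.imp fun y => hP.insert_of_forall (fun u v => dQ_comm u.1 v.1)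
      (fun u v => dQ_eq_zero_iff hSpos) isSTO_lexQ
  rcases P.eq_empty_or_nonempty with rfl | hne
  · exact ⟨x, by simp⟩
  obtain ⟨⟨a, fa⟩, ha, hmin⟩ := Set.exists_min_image P (fun p => dQ S x.1 p.1.1) hfin hne
  rcases eq_or_ne x a with rfl | hxa
  · exact ⟨fa, fun p hp => hP _ ha p hp⟩
  obtain ⟨m, hm⟩ := exists_isLeadingDiff hxa
  exact exists_forth_of_nearest hSpos hfin hP ha hm.dQ_eq fun p hp => hm.dQ_eq ▸ hmin p hp

end QS

/-- `(Q_S, <lex)` is ultrahomogeneous: every order-preserving isometry between finite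
subsets of `Q_S` extends to a bijective order-preserving self-isometry of
`(Q_S, <lex)`. -/
theorem QS_ultrahomogeneous
    (S : Set ℝ) (hScount : S.Countable) (hSpos : ∀ s ∈ S, 0 < s)
    (F : Set (QS S)) (hF : F.Finite) (φ : QS S → QS S)
    (hiso : ∀ x ∈ F, ∀ y ∈ F, dQ S (φ x).1 (φ y).1 = dQ S x.1 y.1)
    (hord : ∀ x ∈ F, ∀ y ∈ F, (lexQ S (φ x).1 (φ y).1 ↔ lexQ S x.1 y.1)) :
    ∃ g : QS S ≃ QS S,
      (∀ x y : QS S, dQ S (g x).1 (g y).1 = dQ S x.1 y.1) ∧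
      (∀ x y : QS S, lexQ S (g x).1 (g y).1 ↔ lexQ S x.1 y.1) ∧
      ∀ x ∈ F, g x = φ x := by
  have := QS.countable hScount
  have hgraph : IsPartialIso (fun x y : QS S => dQ S x.1 y.1) (fun x y => lexQ S x.1 y.1)
      ((fun x => (x, φ x)) '' F) := by
    rintro _ ⟨x, hx, rfl⟩ _ ⟨y, hy, rfl⟩
    exact ⟨hiso x hx y hy, hord x hx y hy⟩
  obtain ⟨g, hgd, hglex, hgφ⟩ := hgraph.exists_equiv_of_forth
    (fun _ _ => QS.dQ_eq_zero_iff hSpos)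
    (fun _ hfin hP => QS.exists_isPartialIso_insert hSpos hfin hP)
    (hF.image _)
  exact ⟨g, hgd, hglex, fun x hx => hgφ (x, φ x) ⟨x, hx, rfl⟩⟩
end
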